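/- arXiv:2112.09675 — 2 statements merged into one kernel-verified Lean document; each statement's English description precedes it below -/
import Mathlib

section
/- The Riesz–Thorin-type interpolation on finite-dimensional spaces of simple functions fails for non-disjoint sets: with the measure space {0,1,2} with counting measure, E_1 = {0,1}, E_2 = {1,2}, X = span{χ_{E_1}, χ_{E_2}}, and T h = (h(0)+h(1)+h(2)) χ_{{0}}, one has ‖Th‖_{L^{q_0}} ≤ ‖h‖_{L^1} and ‖Th‖_{L^{q_1}} ≤ 2‖h‖_{L^∞} for all h ∈ X, yet for h = χ_{E_1} + χ_{E_2} the interpolated estimate ‖Th‖ ≤ 1^{1/2} 2^{1/2} ‖h‖_{L^2} fails. -/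
/-!
`T12 h` is the sum of the values of `h` placed at the point `0`, so `‖T12 h‖_q = |h 0 + h 1 + h 2|`
for every `q ≠ 0`. This is at most `‖h‖₁` for all `h`, and on `X`, where `h 1 = h 0 + h 2`, it
equals `2 |h 1| ≤ 2 ‖h‖_∞`. For `h = χ_{E₁} + χ_{E₂}`, with values `1, 2, 1`, it is `4`, whereas
the interpolated bound is `(1 · 2)^{1/2} (1 + 4 + 1)^{1/2} = √12 < 4`.
-/

open MeasureTheory Filter ENNReal

noncomputable def T12 (h : Fin 3 → ℂ) : Fin 3 → ℂ :=
  Set.indicator ({0} : Set (Fin 3)) (fun _ => h 0 + h 1 + h 2)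

section CountingMeasure

variable {α E : Type*} [MeasurableSpace α] [MeasurableSingletonClass α] [NormedAddCommGroup E]

lemma eLpNorm_count_eq_sum [Fintype α] (f : α → E) {p : ℝ≥0∞} (hp : p ≠ 0) (hp_top : p ≠ ∞) :
    eLpNorm f p Measure.count = (∑ i, ‖f i‖ₑ ^ p.toReal) ^ (1 / p.toReal) := by
  rw [eLpNorm_eq_lintegral_rpow_enorm_toReal hp hp_top, lintegral_count, tsum_fintype]

lemma eLpNorm_indicator_singleton_count_le (a : α) (c : E) (p : ℝ≥0∞) :
    eLpNorm (({a} : Set α).indicator fun _ => c) p Measure.count ≤ ‖c‖ₑ := by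
  simpa [Measure.count_singleton] using
    eLpNorm_indicator_const_le (s := {a}) (μ := Measure.count) c p

end CountingMeasure

lemma eLpNorm_T12_le (h : Fin 3 → ℂ) (p : ℝ≥0∞) :
    eLpNorm (T12 h) p Measure.count ≤ ‖h 0 + h 1 + h 2‖ₑ :=
  eLpNorm_indicator_singleton_count_le 0 _ p

lemma enorm_le_eLpNorm_T12 (h : Fin 3 → ℂ) {p : ℝ≥0∞} (hp : p ≠ 0) :
    ‖h 0 + h 1 + h 2‖ₑ ≤ eLpNorm (T12 h) p Measure.count := by
  simpa [T12] using enorm_le_eLpNorm_count (T12 h) 0 hp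

lemma eLpNorm_T12_le_eLpNorm_one (h : Fin 3 → ℂ) (p : ℝ≥0∞) :
    eLpNorm (T12 h) p Measure.count ≤ eLpNorm h 1 Measure.count := by
  calc eLpNorm (T12 h) p Measure.count ≤ ‖h 0 + h 1 + h 2‖ₑ := eLpNorm_T12_le h p
    _ = ‖∑ i, h i‖ₑ := by rw [Fin.sum_univ_three]
    _ ≤ ∑ i, ‖h i‖ₑ := enorm_sum_le _ h
    _ = eLpNorm h 1 Measure.count := by simp [eLpNorm_count_eq_sum h one_ne_zero one_ne_top]

local notation "χ₀₁" => Set.indicator ({0, 1} : Set (Fin 3)) (fun _ => (1:ℂ))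
local notation "χ₁₂" => Set.indicator ({1, 2} : Set (Fin 3)) (fun _ => (1:ℂ))

lemma apply_one_eq_add_of_mem_span {h : Fin 3 → ℂ} (hh : h ∈ Submodule.span ℂ {χ₀₁, χ₁₂}) :
    h 1 = h 0 + h 2 := by
  obtain ⟨a, b, rfl⟩ := Submodule.mem_span_pair.mp hh
  simp

lemma eLpNorm_T12_le_two_mul_eLpNorm_top_of_mem_span {h : Fin 3 → ℂ}
    (hh : h ∈ Submodule.span ℂ {χ₀₁, χ₁₂}) (p : ℝ≥0∞) :
    eLpNorm (T12 h) p Measure.count ≤ 2 * eLpNorm h ⊤ Measure.count := by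
  have hsum : h 0 + h 1 + h 2 = 2 * h 1 := by
    rw [apply_one_eq_add_of_mem_span hh]; ring
  calc eLpNorm (T12 h) p Measure.count ≤ ‖(2 : ℂ) * h 1‖ₑ := hsum ▸ eLpNorm_T12_le h p
    _ = 2 * ‖h 1‖ₑ := by simp [← ofReal_norm]
    _ ≤ 2 * eLpNorm h ⊤ Measure.count := by gcongr; exact enorm_le_eLpNorm_count h 1 top_ne_zero

lemma indicator_add_indicator_apply :
    (χ₀₁ + χ₁₂) 0 = 1 ∧ (χ₀₁ + χ₁₂) 1 = 2 ∧ (χ₀₁ + χ₁₂) 2 = 1 :=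
  ⟨by simp, by norm_num, by simp⟩

lemma four_le_eLpNorm_T12_indicator_add {q : ℝ≥0∞} (hq : q ≠ 0) :
    4 ≤ eLpNorm (T12 (χ₀₁ + χ₁₂)) q Measure.count := by
  obtain ⟨hv₀, hv₁, hv₂⟩ := indicator_add_indicator_apply
  have := enorm_le_eLpNorm_T12 (χ₀₁ + χ₁₂) hq
  rwa [hv₀, hv₁, hv₂, show (1 + 2 + 1 : ℂ) = 4 by norm_num, ← ofReal_norm,
    Complex.norm_ofNat, ofReal_ofNat] at this

lemma interpolated_bound_indicator_add_lt_four :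
    (1 : ℝ≥0∞) ^ ((1:ℝ)/2) * 2 ^ ((1:ℝ)/2) * eLpNorm (χ₀₁ + χ₁₂) 2 Measure.count < 4 := by
  obtain ⟨hv₀, hv₁, hv₂⟩ := indicator_add_indicator_apply
  rw [eLpNorm_count_eq_sum _ two_ne_zero ofNat_ne_top, Fin.sum_univ_three, hv₀, hv₁, hv₂,
    toReal_ofNat, one_rpow, one_mul, ← mul_rpow_of_nonneg _ _ (by norm_num), one_div,
    rpow_inv_lt_iff two_pos]
  norm_num [← ofReal_norm]

theorem interpolation_fails_for_non_disjoint_sets_general (q₀ q₁ q : ℝ≥0∞) (hq : 1 ≤ q)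
    (X : Submodule ℂ (Fin 3 → ℂ))
    (hX : X = Submodule.span ℂ
      {Set.indicator ({0, 1} : Set (Fin 3)) (fun _ => (1:ℂ)),
       Set.indicator ({1, 2} : Set (Fin 3)) (fun _ => (1:ℂ))}) :
    (∀ h : Fin 3 → ℂ, h ∈ X →
      eLpNorm (T12 h) q₀ (Measure.count : Measure (Fin 3))
        ≤ 1 * eLpNorm h 1 (Measure.count : Measure (Fin 3))) ∧
    (∀ h : Fin 3 → ℂ, h ∈ X →
      eLpNorm (T12 h) q₁ (Measure.count : Measure (Fin 3))
        ≤ 2 * eLpNorm h ⊤ (Measure.count : Measure (Fin 3))) ∧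
    ¬ (eLpNorm
        (T12 (Set.indicator ({0, 1} : Set (Fin 3)) (fun _ => (1:ℂ))
              + Set.indicator ({1, 2} : Set (Fin 3)) (fun _ => (1:ℂ))))
        q (Measure.count : Measure (Fin 3))
      ≤ (1 : ℝ≥0∞) ^ ((1:ℝ)/2) * (2 : ℝ≥0∞) ^ ((1:ℝ)/2) *
        eLpNorm (Set.indicator ({0, 1} : Set (Fin 3)) (fun _ => (1:ℂ))
              + Set.indicator ({1, 2} : Set (Fin 3)) (fun _ => (1:ℂ)))
          2 (Measure.count : Measure (Fin 3))) := by
  subst hX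
  refine ⟨fun h _ => ?_, fun h hh => eLpNorm_T12_le_two_mul_eLpNorm_top_of_mem_span hh q₁,
    fun hle => ?_⟩
  · rw [one_mul]
    exact eLpNorm_T12_le_eLpNorm_one h q₀
  · exact ((four_le_eLpNorm_T12_indicator_add (zero_lt_one.trans_le hq).ne').trans hle).not_gt
      interpolated_bound_indicator_add_lt_four

theorem interpolation_fails_for_non_disjoint_sets (q₀ q₁ q : ℝ≥0∞) (hq₀ : 1 ≤ q₀) (hq₁ : 1 ≤ q₁) (hq : 1 ≤ q)
    (X : Submodule ℂ (Fin 3 → ℂ))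
    (hX : X = Submodule.span ℂ
      {Set.indicator ({0, 1} : Set (Fin 3)) (fun _ => (1:ℂ)),
       Set.indicator ({1, 2} : Set (Fin 3)) (fun _ => (1:ℂ))}) :
    (∀ h : Fin 3 → ℂ, h ∈ X →
      eLpNorm (T12 h) q₀ (Measure.count : Measure (Fin 3))
        ≤ 1 * eLpNorm h 1 (Measure.count : Measure (Fin 3))) ∧
    (∀ h : Fin 3 → ℂ, h ∈ X →
      eLpNorm (T12 h) q₁ (Measure.count : Measure (Fin 3))
        ≤ 2 * eLpNorm h ⊤ (Measure.count : Measure (Fin 3))) ∧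
    ¬ (eLpNorm
        (T12 (Set.indicator ({0, 1} : Set (Fin 3)) (fun _ => (1:ℂ))
              + Set.indicator ({1, 2} : Set (Fin 3)) (fun _ => (1:ℂ))))
        q (Measure.count : Measure (Fin 3))
      ≤ (1 : ℝ≥0∞) ^ ((1:ℝ)/2) * (2 : ℝ≥0∞) ^ ((1:ℝ)/2) *
        eLpNorm (Set.indicator ({0, 1} : Set (Fin 3)) (fun _ => (1:ℂ))
              + Set.indicator ({1, 2} : Set (Fin 3)) (fun _ => (1:ℂ)))
          2 (Measure.count : Measure (Fin 3))) :=
  interpolation_fails_for_non_disjoint_sets_general q₀ q₁ q hq X hX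
end

section
/- Let g ∈ L^2(R^d) \ {0}, Ω ⊂ R^{2d} measurable with 0 < |Ω| < ∞, and 1 ≤ p < ∞. Then the supremum over f ∈ L^2(R^d) \ {0} of (∫_Ω |A(f,g)(x,ω)|^p dx dω)^{1/p} / ‖f‖_{L^2} is attained; moreover every maximizing sequence normalized in L^2 has a subsequence converging in L^2 to a maximizer. -/
open MeasureTheory Complex Filter Real

noncomputable def amb {d : ℕ} (f g : EuclideanSpace ℝ (Fin d) → ℂ)
    (x ω : EuclideanSpace ℝ (Fin d)) : ℂ :=
  ∫ t : EuclideanSpace ℝ (Fin d),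
    f (t + (2:ℝ)⁻¹ • x) * (starRingEnd ℂ) (g (t - (2:ℝ)⁻¹ • x)) *
      Complex.exp (-(2 * Real.pi * Complex.I) * ((inner ℝ t ω : ℝ) : ℂ))

noncomputable def tfShift {d : ℕ} (x ω : EuclideanSpace ℝ (Fin d))
    (f : EuclideanSpace ℝ (Fin d) → ℂ) : EuclideanSpace ℝ (Fin d) → ℂ :=
  fun t => Complex.exp ((2 * Real.pi * Complex.I) * ((inner ℝ t ω : ℝ) : ℂ)) * f (t - x)

/-!
With `π(x,ω) = tfShift x ω`, a change of variables gives `|A(f,g)(x,ω)| = |⟪f, π(x,ω)g⟫|`, and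
`‖π(x,ω)g‖ = ‖g‖`. So `f ↦ (∫_Ω |A(f,g)|^p)^{1/p}` is the `Lᵖ(Ω)`-norm of the coefficients of `f`
against a bounded, weakly measurable family `K` in the separable Hilbert space `L²`, and by
dominated convergence it is continuous along bounded weakly convergent sequences. Its supremum `S`
over the unit sphere is positive: otherwise every `⟪f, K w⟫` would vanish for a.e. `w ∈ Ω`, and
testing against a countable dense set would give `K w = 0` for some `w`. A normalized maximizing
sequence has a weakly convergent subsequence (sequential Banach–Alaoglu) whose limit `h` satisfies
`‖h‖ ≤ 1` and attains the value `S`; maximality then forces `‖h‖ = 1`, and weak convergence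
together with convergence of the norms is norm convergence.
-/

open MeasureTheory Filter Topology TopologicalSpace
open scoped ENNReal InnerProductSpace ComplexConjugate

section WeakConvergence

variable {𝕜 E : Type*} [RCLike 𝕜] [NormedAddCommGroup E] [InnerProductSpace 𝕜 E]

theorem InnerProductSpace.exists_subseq_weakly_tendsto [CompleteSpace E] [SeparableSpace E]
    {u : ℕ → E} {C : ℝ} (hu : ∀ n, ‖u n‖ ≤ C) :
    ∃ (φ : ℕ → ℕ) (h : E), StrictMono φ ∧ ‖h‖ ≤ C ∧
      ∀ y, Tendsto (fun n => ⟪u (φ n), y⟫_𝕜) atTop (𝓝 ⟪h, y⟫_𝕜) := by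
  let T : E → WeakDual 𝕜 E := fun x => WeakDual.toStrongDual.symm (toDual 𝕜 E x)
  have hball : ∀ n, T (u n) ∈ WeakDual.toStrongDual ⁻¹' Metric.closedBall 0 C := by
    simp [T, hu]
  obtain ⟨ℓ, hℓ, φ, hφ, hlim⟩ := WeakDual.isSeqCompact_closedBall 𝕜 E 0 C hball
  refine ⟨φ, (toDual 𝕜 E).symm (WeakDual.toStrongDual ℓ), hφ, by simpa using hℓ, fun y => ?_⟩
  rw [InnerProductSpace.toDual_symm_apply]
  exact ((WeakDual.eval_continuous y).tendsto ℓ).comp hlim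

theorem tendsto_of_weakly_tendsto_of_tendsto_norm {u : ℕ → E} {h : E}
    (hw : ∀ y, Tendsto (fun n => ⟪u n, y⟫_𝕜) atTop (𝓝 ⟪h, y⟫_𝕜))
    (hn : Tendsto (fun n => ‖u n‖) atTop (𝓝 ‖h‖)) : Tendsto u atTop (𝓝 h) := by
  have hsq : Tendsto (fun n => ‖u n‖ ^ 2 - 2 * RCLike.re ⟪u n, h⟫_𝕜 + ‖h‖ ^ 2) atTop
      (𝓝 (‖h‖ ^ 2 - 2 * RCLike.re ⟪h, h⟫_𝕜 + ‖h‖ ^ 2)) :=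
    ((hn.pow 2).sub (((RCLike.continuous_re.tendsto _).comp (hw h)).const_mul 2)).add
      tendsto_const_nhds
  rw [inner_self_eq_norm_sq, show ‖h‖ ^ 2 - 2 * ‖h‖ ^ 2 + ‖h‖ ^ 2 = 0 by ring] at hsq
  simp_rw [← norm_sub_sq (𝕜 := 𝕜)] at hsq
  rw [tendsto_iff_norm_sub_tendsto_zero]
  simpa [Real.sqrt_sq (norm_nonneg _)] using hsq.sqrt

end WeakConvergence

theorem norm_inner_rpow_le {𝕜 E X : Type*} [RCLike 𝕜] [NormedAddCommGroup E]
    [InnerProductSpace 𝕜 E] {K : X → E} {M p : ℝ} (hp : 0 ≤ p) (hK : ∀ w, ‖K w‖ ≤ M) (f : E)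
    (w : X) : ‖⟪f, K w⟫_𝕜‖ ^ p ≤ (‖f‖ * M) ^ p :=
  Real.rpow_le_rpow (norm_nonneg _)
    ((norm_inner_le_norm f (K w)).trans (mul_le_mul_of_nonneg_left (hK w) (norm_nonneg f))) hp

section Concentration

variable (𝕜 : Type*) {E X : Type*} [RCLike 𝕜] [NormedAddCommGroup E] [InnerProductSpace 𝕜 E]
  [MeasurableSpace X] (μ : Measure X) (K : X → E) (p : ℝ)

noncomputable def concentration (f : E) : ℝ := (∫ w, ‖⟪f, K w⟫_𝕜‖ ^ p ∂μ) ^ (1 / p)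

noncomputable def concentrationSup : ℝ :=
  sSup ((fun f => concentration 𝕜 μ K p f / ‖f‖) '' {0}ᶜ)

variable {𝕜 μ K p}

theorem concentration_nonneg (f : E) : 0 ≤ concentration 𝕜 μ K p f :=
  Real.rpow_nonneg (integral_nonneg fun _ => Real.rpow_nonneg (norm_nonneg _) _) _

theorem concentration_zero (hp : p ≠ 0) : concentration 𝕜 μ K p 0 = 0 := by
  simp [concentration, Real.zero_rpow hp, Real.zero_rpow (inv_ne_zero hp)]

theorem concentration_smul (hp : 0 < p) (c : 𝕜) (f : E) :
    concentration 𝕜 μ K p (c • f) = ‖c‖ * concentration 𝕜 μ K p f := by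
  have hint : ∀ w, ‖⟪c • f, K w⟫_𝕜‖ ^ p = ‖c‖ ^ p * ‖⟪f, K w⟫_𝕜‖ ^ p := fun w => by
    rw [inner_smul_left, norm_mul, RCLike.norm_conj, Real.mul_rpow (norm_nonneg _) (norm_nonneg _)]
  simp only [concentration, hint, integral_const_mul]
  rw [Real.mul_rpow (by positivity) (integral_nonneg fun _ => by positivity),
    ← Real.rpow_mul (norm_nonneg _), mul_one_div_cancel hp.ne', Real.rpow_one]

theorem concentration_le [IsFiniteMeasure μ] (hp : 0 < p) {M : ℝ} (hK : ∀ w, ‖K w‖ ≤ M)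
    (f : E) : concentration 𝕜 μ K p f ≤ ‖f‖ * M * μ.real Set.univ ^ (1 / p) := by
  rcases isEmpty_or_nonempty X with hX | ⟨⟨w₀⟩⟩
  · rw [Measure.eq_zero_of_isEmpty μ]
    simp [concentration, Real.zero_rpow (inv_ne_zero hp.ne')]
  have hM : 0 ≤ ‖f‖ * M := mul_nonneg (norm_nonneg f) ((norm_nonneg _).trans (hK w₀))
  calc concentration 𝕜 μ K p f ≤ (∫ _w, (‖f‖ * M) ^ p ∂μ) ^ (1 / p) := by
        refine Real.rpow_le_rpow (integral_nonneg fun _ => by positivity) ?_ (by positivity)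
        exact integral_mono_of_nonneg (Eventually.of_forall fun _ => by positivity)
          (integrable_const _) (Eventually.of_forall (norm_inner_rpow_le hp.le hK f))
    _ = ‖f‖ * M * μ.real Set.univ ^ (1 / p) := by
        rw [integral_const, smul_eq_mul, Real.mul_rpow measureReal_nonneg (by positivity),
          ← Real.rpow_mul hM, mul_one_div_cancel hp.ne', Real.rpow_one, mul_comm]

theorem bddAbove_concentration_div_norm [IsFiniteMeasure μ] (hp : 0 < p) {M : ℝ}
    (hK : ∀ w, ‖K w‖ ≤ M) : BddAbove ((fun f => concentration 𝕜 μ K p f / ‖f‖) '' {0}ᶜ) := by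
  refine ⟨M * μ.real Set.univ ^ (1 / p), ?_⟩
  rintro _ ⟨f, hf, rfl⟩
  rw [div_le_iff₀ (norm_pos_iff.2 hf)]
  linarith [concentration_le (𝕜 := 𝕜) (μ := μ) hp hK f]

theorem tendsto_concentration [IsFiniteMeasure μ] (hp : 0 < p)
    (hKm : ∀ f, AEStronglyMeasurable (fun w => ⟪f, K w⟫_𝕜) μ) {M : ℝ} (hK : ∀ w, ‖K w‖ ≤ M)
    {u : ℕ → E} {h : E} {C : ℝ} (hu : ∀ n, ‖u n‖ ≤ C)
    (hw : ∀ y, Tendsto (fun n => ⟪u n, y⟫_𝕜) atTop (𝓝 ⟪h, y⟫_𝕜)) :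
    Tendsto (fun n => concentration 𝕜 μ K p (u n)) atTop (𝓝 (concentration 𝕜 μ K p h)) := by
  have hpow : Continuous fun z : 𝕜 => ‖z‖ ^ p :=
    (Real.continuous_rpow_const hp.le).comp continuous_norm
  have hint : Tendsto (fun n => ∫ w, ‖⟪u n, K w⟫_𝕜‖ ^ p ∂μ) atTop
      (𝓝 (∫ w, ‖⟪h, K w⟫_𝕜‖ ^ p ∂μ)) := by
    refine tendsto_integral_of_dominated_convergence (μ := μ) (fun _ => (C * M) ^ p)
      (fun n => hpow.comp_aestronglyMeasurable (hKm (u n))) (integrable_const _)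
      (fun n => Eventually.of_forall fun w => ?_)
      (Eventually.of_forall fun w => (hpow.tendsto _).comp (hw (K w)))
    rw [Real.norm_of_nonneg (by positivity)]
    exact (norm_inner_rpow_le hp.le hK _ w).trans
      (Real.rpow_le_rpow (mul_nonneg (norm_nonneg _) ((norm_nonneg _).trans (hK w)))
        (mul_le_mul_of_nonneg_right (hu n) ((norm_nonneg _).trans (hK w))) hp.le)
  exact ((Real.continuous_rpow_const (by positivity)).tendsto _).comp hint

theorem exists_concentration_pos [IsFiniteMeasure μ] [SecondCountableTopology E] (hp : 0 < p)
    (hKm : ∀ f, AEStronglyMeasurable (fun w => ⟪f, K w⟫_𝕜) μ) {M : ℝ} (hK : ∀ w, ‖K w‖ ≤ M)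
    (hμ : μ ≠ 0) (hK0 : ∀ w, K w ≠ 0) : ∃ f : E, 0 < concentration 𝕜 μ K p f := by
  by_contra! hzero
  have hinner : ∀ f : E, (fun w => ⟪f, K w⟫_𝕜) =ᵐ[μ] 0 := by
    intro f
    have hint : Integrable (fun w => ‖⟪f, K w⟫_𝕜‖ ^ p) μ :=
      .of_bound ((Real.continuous_rpow_const hp.le).comp_aestronglyMeasurable (hKm f).norm)
        ((‖f‖ * M) ^ p) (Eventually.of_forall fun w => by
          rw [Real.norm_of_nonneg (by positivity)]; exact norm_inner_rpow_le hp.le hK f w)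
    have hI : ∫ w, ‖⟪f, K w⟫_𝕜‖ ^ p ∂μ = 0 := by
      have := le_antisymm (hzero f) (concentration_nonneg f)
      rwa [concentration, Real.rpow_eq_zero (integral_nonneg fun _ => by positivity)
        (one_div_ne_zero hp.ne')] at this
    filter_upwards [(integral_eq_zero_iff_of_nonneg (fun _ => by positivity) hint).1 hI]
      with w hw
    simpa [Real.rpow_eq_zero (norm_nonneg _) hp.ne'] using hw
  have := ae_neBot.2 hμ
  obtain ⟨w, hw⟩ := (ae_eq_zero_of_forall_inner hinner).exists
  exact hK0 w hw

theorem concentrationSup_pos [IsFiniteMeasure μ] [SecondCountableTopology E] (hp : 0 < p)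
    (hKm : ∀ f, AEStronglyMeasurable (fun w => ⟪f, K w⟫_𝕜) μ) {M : ℝ} (hK : ∀ w, ‖K w‖ ≤ M)
    (hμ : μ ≠ 0) (hK0 : ∀ w, K w ≠ 0) : 0 < concentrationSup 𝕜 μ K p := by
  obtain ⟨f, hf⟩ := exists_concentration_pos hp hKm hK hμ hK0
  have hf0 : f ≠ 0 := by rintro rfl; simp [concentration_zero hp.ne'] at hf
  exact (div_pos hf (norm_pos_iff.2 hf0)).trans_le
    (le_csSup (bddAbove_concentration_div_norm hp hK) ⟨f, hf0, rfl⟩)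

theorem exists_tendsto_concentrationSup [IsFiniteMeasure μ] (hp : 0 < p) {M : ℝ}
    (hK : ∀ w, ‖K w‖ ≤ M) {f₀ : E} (hf₀ : f₀ ≠ 0) :
    ∃ u : ℕ → E, (∀ n, ‖u n‖ = 1) ∧
      Tendsto (fun n => concentration 𝕜 μ K p (u n)) atTop (𝓝 (concentrationSup 𝕜 μ K p)) := by
  obtain ⟨r, -, hr, hmem⟩ := exists_seq_tendsto_sSup (Set.Nonempty.image _ ⟨f₀, hf₀⟩)
    (bddAbove_concentration_div_norm (𝕜 := 𝕜) (μ := μ) hp hK)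
  choose f hf0 hfr using hmem
  refine ⟨fun n => (‖f n‖ : 𝕜)⁻¹ • f n, fun n => norm_smul_inv_norm (hf0 n), ?_⟩
  refine hr.congr fun n => ?_
  rw [concentration_smul hp, ← hfr n, norm_inv, RCLike.norm_ofReal, abs_norm, inv_mul_eq_div]

theorem exists_subseq_tendsto_of_tendsto_concentrationSup [CompleteSpace E]
    [SeparableSpace E] [IsFiniteMeasure μ] (hp : 0 < p)
    (hKm : ∀ f, AEStronglyMeasurable (fun w => ⟪f, K w⟫_𝕜) μ) {M : ℝ} (hK : ∀ w, ‖K w‖ ≤ M)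
    (hpos : 0 < concentrationSup 𝕜 μ K p) {u : ℕ → E} (hu : ∀ n, ‖u n‖ = 1)
    (hlim : Tendsto (fun n => concentration 𝕜 μ K p (u n)) atTop
      (𝓝 (concentrationSup 𝕜 μ K p))) :
    ∃ (φ : ℕ → ℕ) (h : E), StrictMono φ ∧ ‖h‖ = 1 ∧
      concentration 𝕜 μ K p h = concentrationSup 𝕜 μ K p ∧ Tendsto (u ∘ φ) atTop (𝓝 h) := by
  obtain ⟨φ, h, hφ, hh, hw⟩ :=
    InnerProductSpace.exists_subseq_weakly_tendsto (𝕜 := 𝕜) fun n => (hu n).le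
  have hval : concentration 𝕜 μ K p h = concentrationSup 𝕜 μ K p :=
    tendsto_nhds_unique (tendsto_concentration hp hKm hK (fun n => (hu (φ n)).le) hw)
      (hlim.comp hφ.tendsto_atTop)
  have hh0 : h ≠ 0 := by
    rintro rfl
    rw [concentration_zero hp.ne'] at hval
    exact hpos.ne hval
  -- `‖h‖ ≤ 1` by weak lower semicontinuity; maximality of `concentrationSup` at `h` gives `≥`
  have hh1 : ‖h‖ = 1 := by
    refine le_antisymm hh ?_
    have : concentration 𝕜 μ K p h / ‖h‖ ≤ concentrationSup 𝕜 μ K p :=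
      le_csSup (bddAbove_concentration_div_norm hp hK) ⟨h, hh0, rfl⟩
    rw [hval, div_le_iff₀ (norm_pos_iff.2 hh0)] at this
    exact (le_mul_iff_one_le_right hpos).1 this
  refine ⟨φ, h, hφ, hh1, hval, tendsto_of_weakly_tendsto_of_tendsto_norm hw ?_⟩
  simp only [Function.comp_apply, hu, hh1, tendsto_const_nhds]

end Concentration

section TimeFrequencyShift

variable {d : ℕ}

local notation "𝔼" => EuclideanSpace ℝ (Fin d)

theorem norm_exp_two_pi_I_mul (r : ℝ) : ‖cexp (2 * π * I * r)‖ = 1 := by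
  rw [show 2 * π * I * r = ((2 * π * r : ℝ) : ℂ) * I by push_cast; ring]
  exact norm_exp_ofReal_mul_I _

theorem norm_tfShift_apply (x ω : 𝔼) (f : 𝔼 → ℂ) (t : 𝔼) :
    ‖tfShift x ω f t‖ = ‖f (t - x)‖ := by
  rw [tfShift, norm_mul, norm_exp_two_pi_I_mul, one_mul]

theorem aestronglyMeasurable_tfShift {f : 𝔼 → ℂ} (hf : AEStronglyMeasurable f volume)
    (x ω : 𝔼) : AEStronglyMeasurable (tfShift x ω f) volume := by
  have hphase : Continuous fun t : 𝔼 => cexp (2 * π * I * (inner ℝ t ω : ℝ)) := by fun_prop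
  exact hphase.aestronglyMeasurable.mul
    (hf.comp_measurePreserving (measurePreserving_sub_right volume x))

theorem eLpNorm_tfShift {f : 𝔼 → ℂ} (hf : AEStronglyMeasurable f volume) (q : ℝ≥0∞) (x ω : 𝔼) :
    eLpNorm (tfShift x ω f) q volume = eLpNorm f q volume := by
  rw [eLpNorm_congr_norm_ae (Eventually.of_forall (norm_tfShift_apply x ω f))]
  exact eLpNorm_comp_measurePreserving hf (measurePreserving_sub_right volume x)

theorem memLp_tfShift {f : 𝔼 → ℂ} {q : ℝ≥0∞} (hf : MemLp f q volume) (x ω : 𝔼) :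
    MemLp (tfShift x ω f) q volume :=
  ⟨aestronglyMeasurable_tfShift hf.1 x ω, by rw [eLpNorm_tfShift hf.1]; exact hf.2⟩

noncomputable def tfShiftLp {g : 𝔼 → ℂ} (hg : MemLp g 2 volume) (z : 𝔼 × 𝔼) :
    Lp ℂ 2 (volume : Measure 𝔼) :=
  (memLp_tfShift hg z.1 z.2).toLp _

theorem norm_tfShiftLp {g : 𝔼 → ℂ} (hg : MemLp g 2 volume) (z : 𝔼 × 𝔼) :
    ‖tfShiftLp hg z‖ = (eLpNorm g 2 volume).toReal := by
  rw [tfShiftLp, Lp.norm_toLp, eLpNorm_tfShift hg.1]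

theorem inner_tfShiftLp {g : 𝔼 → ℂ} (hg : MemLp g 2 volume) (f : Lp ℂ 2 (volume : Measure 𝔼))
    (z : 𝔼 × 𝔼) : ⟪f, tfShiftLp hg z⟫_ℂ = ∫ u, conj (f u) * tfShift z.1 z.2 g u := by
  rw [L2.inner_def]
  refine integral_congr_ae ?_
  filter_upwards [(memLp_tfShift hg z.1 z.2).coeFn_toLp] with u hu
  rw [tfShiftLp, hu, RCLike.inner_apply, mul_comm]

theorem amb_eq_exp_mul_integral (f g : 𝔼 → ℂ) (x ω : 𝔼) :
    amb f g x ω = cexp (2 * π * I * (inner ℝ ((2 : ℝ)⁻¹ • x) ω : ℝ)) *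
      ∫ u, conj (tfShift x ω g u) * f u := by
  rw [amb, ← integral_const_mul]
  conv_rhs => rw [← integral_add_right_eq_self _ ((2 : ℝ)⁻¹ • x)]
  congr 1
  funext t
  have hshift : t + (2 : ℝ)⁻¹ • x - x = t - (2 : ℝ)⁻¹ • x := by module
  simp only [tfShift, hshift, map_mul, ← Complex.exp_conj, inner_add_left, map_ofNat,
    Complex.conj_ofReal, Complex.conj_I]
  have hphase : cexp (2 * π * I * (inner ℝ ((2 : ℝ)⁻¹ • x) ω : ℝ)) *
      cexp (2 * π * -I * ((inner ℝ t ω + inner ℝ ((2 : ℝ)⁻¹ • x) ω : ℝ) : ℂ)) =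
      cexp (-(2 * π * I) * (inner ℝ t ω : ℝ)) := by
    rw [← Complex.exp_add]; push_cast; ring_nf
  linear_combination (-(f (t + (2 : ℝ)⁻¹ • x) * conj (g (t - (2 : ℝ)⁻¹ • x)))) * hphase

theorem norm_amb_eq_norm_inner {f g : 𝔼 → ℂ} (hg : MemLp g 2 volume) (hf : MemLp f 2 volume)
    (x ω : 𝔼) : ‖amb f g x ω‖ = ‖⟪hf.toLp f, tfShiftLp hg (x, ω)⟫_ℂ‖ := by
  rw [amb_eq_exp_mul_integral, norm_mul, norm_exp_two_pi_I_mul, one_mul, inner_tfShiftLp,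
    ← RCLike.norm_conj, ← integral_conj]
  congr 1
  refine integral_congr_ae ?_
  filter_upwards [hf.coeFn_toLp] with u hu
  simp [hu, mul_comm]

theorem aestronglyMeasurable_inner_tfShiftLp {g : 𝔼 → ℂ} (hg : MemLp g 2 volume)
    (f : Lp ℂ 2 (volume : Measure 𝔼)) :
    AEStronglyMeasurable (fun z => ⟪f, tfShiftLp hg z⟫_ℂ) volume := by
  simp_rw [inner_tfShiftLp, tfShift]
  have hsub : Measure.QuasiMeasurePreserving (fun q : (𝔼 × 𝔼) × 𝔼 => q.2 - q.1.1)
      ((volume : Measure (𝔼 × 𝔼)).prod volume) volume :=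
    QuasiMeasurePreserving.prod_of_right (by fun_prop) (Eventually.of_forall fun z =>
      (measurePreserving_sub_right volume z.1).quasiMeasurePreserving)
  have hf : AEStronglyMeasurable (fun q : (𝔼 × 𝔼) × 𝔼 => conj (f q.2))
      ((volume : Measure (𝔼 × 𝔼)).prod volume) :=
    continuous_conj.comp_aestronglyMeasurable
      ((Lp.aestronglyMeasurable f).comp_quasiMeasurePreserving Measure.quasiMeasurePreserving_snd)
  have hphase : Continuous fun q : (𝔼 × 𝔼) × 𝔼 => cexp (2 * π * I * (inner ℝ q.2 q.1.2 : ℝ)) := by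
    fun_prop
  exact AEStronglyMeasurable.integral_prod_right' (f := fun q : (𝔼 × 𝔼) × 𝔼 =>
    conj (f q.2) * (cexp (2 * π * I * (inner ℝ q.2 q.1.2 : ℝ)) * g (q.2 - q.1.1)))
    (hf.mul (hphase.aestronglyMeasurable.mul (hg.1.comp_quasiMeasurePreserving hsub)))

theorem concentration_tfShiftLp_toLp {f g : 𝔼 → ℂ} (hg : MemLp g 2 volume)
    (hf : MemLp f 2 volume) (Ω : Set (𝔼 × 𝔼)) (p : ℝ) :
    concentration ℂ (volume.restrict Ω) (tfShiftLp hg) p (hf.toLp f) =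
      (∫ w in Ω, ‖amb f g w.1 w.2‖ ^ p) ^ (1 / p) := by
  simp only [concentration, norm_amb_eq_norm_inner hg hf]

theorem setOf_amb_ratio_eq_image {g : 𝔼 → ℂ} (hg : MemLp g 2 volume) (Ω : Set (𝔼 × 𝔼))
    (p : ℝ) :
    {r : ℝ | ∃ f : 𝔼 → ℂ, MemLp f 2 volume ∧ eLpNorm f 2 volume ≠ 0 ∧
        r = (∫ w in Ω, ‖amb f g w.1 w.2‖ ^ p) ^ (1 / p) / (eLpNorm f 2 volume).toReal} =
      (fun f => concentration ℂ (volume.restrict Ω) (tfShiftLp hg) p f / ‖f‖) '' {0}ᶜ := by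
  ext r
  constructor
  · rintro ⟨f, hf, hf0, rfl⟩
    refine ⟨hf.toLp f, ?_, ?_⟩
    · rw [Set.mem_compl_singleton_iff, ← norm_ne_zero_iff, Lp.norm_toLp]
      exact ENNReal.toReal_ne_zero.2 ⟨hf0, hf.2.ne⟩
    · simp only [concentration_tfShiftLp_toLp hg hf, Lp.norm_toLp]
  · rintro ⟨f, hf0, rfl⟩
    refine ⟨f, Lp.memLp f, by rwa [← Lp.enorm_def, Ne, enorm_eq_zero], ?_⟩
    rw [← concentration_tfShiftLp_toLp hg (Lp.memLp f), Lp.toLp_coeFn, ← Lp.norm_def]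

end TimeFrequencyShift

theorem fixed_window_maximizer_exists_general {d : ℕ}
    (g : EuclideanSpace ℝ (Fin d) → ℂ)
    (hg : MemLp g 2 volume) (hg0 : eLpNorm g 2 volume ≠ 0)
    (Ω : Set (EuclideanSpace ℝ (Fin d) × EuclideanSpace ℝ (Fin d)))
    (hΩ0 : 0 < volume Ω) (hΩfin : volume Ω < ⊤)
    (p : ℝ) (hp : 1 ≤ p) :
    (∃ f : EuclideanSpace ℝ (Fin d) → ℂ,
        MemLp f 2 volume ∧ eLpNorm f 2 volume ≠ 0 ∧
        (∫ w in Ω, ‖amb f g w.1 w.2‖ ^ p) ^ (1/p) / (eLpNorm f 2 volume).toReal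
          = sSup {r : ℝ | ∃ f' : EuclideanSpace ℝ (Fin d) → ℂ,
              MemLp f' 2 volume ∧ eLpNorm f' 2 volume ≠ 0 ∧
              r = (∫ w in Ω, ‖amb f' g w.1 w.2‖ ^ p) ^ (1/p)
                    / (eLpNorm f' 2 volume).toReal}) ∧
    (∀ F : ℕ → EuclideanSpace ℝ (Fin d) → ℂ,
      (∀ n, MemLp (F n) 2 volume) → (∀ n, eLpNorm (F n) 2 volume = 1) →
      Tendsto (fun n => (∫ w in Ω, ‖amb (F n) g w.1 w.2‖ ^ p) ^ (1/p)) atTop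
        (nhds (sSup {r : ℝ | ∃ f' : EuclideanSpace ℝ (Fin d) → ℂ,
              MemLp f' 2 volume ∧ eLpNorm f' 2 volume ≠ 0 ∧
              r = (∫ w in Ω, ‖amb f' g w.1 w.2‖ ^ p) ^ (1/p)
                    / (eLpNorm f' 2 volume).toReal})) →
      ∃ (φ : ℕ → ℕ) (fmax : EuclideanSpace ℝ (Fin d) → ℂ),
        StrictMono φ ∧ MemLp fmax 2 volume ∧ eLpNorm fmax 2 volume = 1 ∧
        (∫ w in Ω, ‖amb fmax g w.1 w.2‖ ^ p) ^ (1/p)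
          = sSup {r : ℝ | ∃ f' : EuclideanSpace ℝ (Fin d) → ℂ,
              MemLp f' 2 volume ∧ eLpNorm f' 2 volume ≠ 0 ∧
              r = (∫ w in Ω, ‖amb f' g w.1 w.2‖ ^ p) ^ (1/p)
                    / (eLpNorm f' 2 volume).toReal} ∧
        Tendsto (fun n => eLpNorm (fun t => F (φ n) t - fmax t) 2 volume)
          atTop (nhds 0)) := by
  have : Fact ((2 : ℝ≥0∞) ≠ ∞) := ⟨ENNReal.ofNat_ne_top⟩
  have : IsFiniteMeasure (volume.restrict Ω) := isFiniteMeasure_restrict.2 hΩfin.ne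
  have hp0 : 0 < p := by linarith
  have hKm := fun f => (aestronglyMeasurable_inner_tfShiftLp hg f).restrict (s := Ω)
  have hK := fun z => (norm_tfShiftLp hg z).le
  have hK0 : ∀ z, tfShiftLp hg z ≠ 0 := fun z => by
    rw [← norm_ne_zero_iff, norm_tfShiftLp]; exact ENNReal.toReal_ne_zero.2 ⟨hg0, hg.2.ne⟩
  have hpos := concentrationSup_pos hp0 hKm hK (Measure.restrict_eq_zero.not.2 hΩ0.ne') hK0
  have hLp1 : ∀ h : Lp ℂ 2 (volume : Measure (EuclideanSpace ℝ (Fin d))), ‖h‖ = 1 →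
      eLpNorm h 2 volume = 1 := fun h hh => by
    rw [← Lp.enorm_def, ← ofReal_norm, hh, ENNReal.ofReal_one]
  rw [setOf_amb_ratio_eq_image hg Ω p]
  refine ⟨?_, fun F hF hF1 hlim => ?_⟩
  · obtain ⟨u, hu1, hu⟩ :=
      exists_tendsto_concentrationSup (𝕜 := ℂ) (μ := volume.restrict Ω) hp0 hK (hK0 0)
    obtain ⟨-, h, -, hh1, hhS, -⟩ :=
      exists_subseq_tendsto_of_tendsto_concentrationSup hp0 hKm hK hpos hu1 hu
    refine ⟨h, Lp.memLp h, by simp [hLp1 h hh1], ?_⟩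
    rw [hLp1 h hh1, ENNReal.toReal_one, div_one, ← concentration_tfShiftLp_toLp hg (Lp.memLp h),
      Lp.toLp_coeFn]
    exact hhS
  · obtain ⟨φ, h, hφ, hh1, hhS, hconv⟩ :=
      exists_subseq_tendsto_of_tendsto_concentrationSup hp0 hKm hK hpos
        (u := fun n => (hF n).toLp (F n)) (fun n => by simp [Lp.norm_toLp, hF1 n])
        (by simp only [concentration_tfShiftLp_toLp hg (hF _)]; exact hlim)
    refine ⟨φ, h, hφ, Lp.memLp h, hLp1 h hh1, ?_, ?_⟩
    · rwa [← concentration_tfShiftLp_toLp hg (Lp.memLp h), Lp.toLp_coeFn]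
    · have := tendsto_iff_edist_tendsto_0.1 hconv
      rw [← Lp.toLp_coeFn h (Lp.memLp h)] at this
      simp only [Function.comp_apply, Lp.edist_toLp_toLp] at this
      exact this

theorem fixed_window_maximizer_exists {d : ℕ}
    (g : EuclideanSpace ℝ (Fin d) → ℂ)
    (hg : MemLp g 2 volume) (hg0 : eLpNorm g 2 volume ≠ 0)
    (Ω : Set (EuclideanSpace ℝ (Fin d) × EuclideanSpace ℝ (Fin d)))
    (hΩm : MeasurableSet Ω) (hΩ0 : 0 < volume Ω) (hΩfin : volume Ω < ⊤)
    (p : ℝ) (hp : 1 ≤ p) :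
    (∃ f : EuclideanSpace ℝ (Fin d) → ℂ,
        MemLp f 2 volume ∧ eLpNorm f 2 volume ≠ 0 ∧
        (∫ w in Ω, ‖amb f g w.1 w.2‖ ^ p) ^ (1/p) / (eLpNorm f 2 volume).toReal
          = sSup {r : ℝ | ∃ f' : EuclideanSpace ℝ (Fin d) → ℂ,
              MemLp f' 2 volume ∧ eLpNorm f' 2 volume ≠ 0 ∧
              r = (∫ w in Ω, ‖amb f' g w.1 w.2‖ ^ p) ^ (1/p)
                    / (eLpNorm f' 2 volume).toReal}) ∧
    (∀ F : ℕ → EuclideanSpace ℝ (Fin d) → ℂ,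
      (∀ n, MemLp (F n) 2 volume) → (∀ n, eLpNorm (F n) 2 volume = 1) →
      Tendsto (fun n => (∫ w in Ω, ‖amb (F n) g w.1 w.2‖ ^ p) ^ (1/p)) atTop
        (nhds (sSup {r : ℝ | ∃ f' : EuclideanSpace ℝ (Fin d) → ℂ,
              MemLp f' 2 volume ∧ eLpNorm f' 2 volume ≠ 0 ∧
              r = (∫ w in Ω, ‖amb f' g w.1 w.2‖ ^ p) ^ (1/p)
                    / (eLpNorm f' 2 volume).toReal})) →
      ∃ (φ : ℕ → ℕ) (fmax : EuclideanSpace ℝ (Fin d) → ℂ),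
        StrictMono φ ∧ MemLp fmax 2 volume ∧ eLpNorm fmax 2 volume = 1 ∧
        (∫ w in Ω, ‖amb fmax g w.1 w.2‖ ^ p) ^ (1/p)
          = sSup {r : ℝ | ∃ f' : EuclideanSpace ℝ (Fin d) → ℂ,
              MemLp f' 2 volume ∧ eLpNorm f' 2 volume ≠ 0 ∧
              r = (∫ w in Ω, ‖amb f' g w.1 w.2‖ ^ p) ^ (1/p)
                    / (eLpNorm f' 2 volume).toReal} ∧
        Tendsto (fun n => eLpNorm (fun t => F (φ n) t - fmax t) 2 volume)
          atTop (nhds 0)) :=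
  fixed_window_maximizer_exists_general g hg hg0 Ω hΩ0 hΩfin p hp
end
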